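/- arXiv:1812.02091 — 3 statements merged into one kernel-verified Lean document; each statement's English description precedes it below -/
import Mathlib

section
/- Let p ∈ ℝ^{h_p} and q ∈ ℝ^{h_q} be nonnegative vectors with ∑_i p_i = ∑_j q_j = 1, and let C be a nonnegative h_p × h_q cost matrix. Then the minimum of ∑_{i,j} F_{i,j} C_{i,j} over nonnegative matrices F satisfying only the out-flow constraints ∑_j F_{i,j} = p_i for all i equals ∑_i p_i · (min_j C_{i,j}). In particular, the minimum is attained by the flow that sends all of p_i to a column j minimizing C_{i,j}. -/
/-!
Without the in-flow constraints, every remaining constraint involves a single row of `F`, so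
the problem splits into independent rows: distribute the mass `p i` over the columns at least
cost. A row carrying mass `p i` costs at least `p i * min_j C i j`, and sending all of it to
a cheapest column costs exactly that.
-/

open Finset

section RowwiseTransport

variable {ι κ : Type*} [Fintype ι] [Fintype κ] [Nonempty κ]

theorem inf'_univ_eq_of_forall_le {c : κ → ℝ} {j₀ : κ} (h : ∀ j, c j₀ ≤ c j) :
    univ.inf' univ_nonempty c = c j₀ :=
  le_antisymm (inf'_le _ (mem_univ _)) (le_inf' _ _ fun j _ => h j)

theorem sum_mul_inf'_le_sum_mul {f c : κ → ℝ} (hf : ∀ j, 0 ≤ f j) :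
    (∑ j, f j) * univ.inf' univ_nonempty c ≤ ∑ j, f j * c j := by
  rw [sum_mul]
  exact sum_le_sum fun j _ => mul_le_mul_of_nonneg_left (inf'_le _ (mem_univ _)) (hf j)

theorem sum_mul_inf'_le_transportCost {p : ι → ℝ} {F C : ι → κ → ℝ}
    (hF : ∀ i j, 0 ≤ F i j) (hrow : ∀ i, ∑ j, F i j = p i) :
    ∑ i, p i * univ.inf' univ_nonempty (C i) ≤ ∑ i, ∑ j, F i j * C i j :=
  sum_le_sum fun i _ => hrow i ▸ sum_mul_inf'_le_sum_mul (hF i)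

variable [DecidableEq κ]

theorem transportCost_greedy_eq {p : ι → ℝ} {C : ι → κ → ℝ} {σ : ι → κ}
    (hσ : ∀ i j, C i (σ i) ≤ C i j) :
    ∑ i, ∑ j, (if j = σ i then p i else 0) * C i j
      = ∑ i, p i * univ.inf' univ_nonempty (C i) := by
  refine sum_congr rfl fun i _ => ?_
  simp only [ite_mul, zero_mul, sum_ite_eq', mem_univ, if_true]
  rw [inf'_univ_eq_of_forall_le (hσ i)]

end RowwiseTransport

theorem stmt_0_general (hp hq : ℕ) (p : Fin (hp + 1) → ℝ)
    (hpnn : ∀ i, 0 ≤ p i)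
    (C : Fin (hp + 1) → Fin (hq + 1) → ℝ) :
    IsLeast
      {c : ℝ | ∃ F : Fin (hp + 1) → Fin (hq + 1) → ℝ,
        (∀ i j, 0 ≤ F i j) ∧ (∀ i, ∑ j, F i j = p i) ∧
        c = ∑ i, ∑ j, F i j * C i j}
      (∑ i, p i * Finset.univ.inf' Finset.univ_nonempty (C i)) ∧
    ∀ σ : Fin (hp + 1) → Fin (hq + 1), (∀ i j, C i (σ i) ≤ C i j) →
      (∑ i, ∑ j, (if j = σ i then p i else 0) * C i j)
        = ∑ i, p i * Finset.univ.inf' Finset.univ_nonempty (C i) := by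
  choose σ hσ using fun i => Finite.exists_min (C i)
  refine ⟨⟨⟨fun i j => if j = σ i then p i else 0, fun i _ => ite_nonneg (hpnn i) le_rfl,
    fun i => by simp, (transportCost_greedy_eq hσ).symm⟩, ?_⟩, fun _ => transportCost_greedy_eq⟩
  rintro c ⟨F, hF, hrow, rfl⟩
  exact sum_mul_inf'_le_transportCost hF hrow

/-- One-sided RWMD: with only out-flow constraints, the minimum transport cost equals
`∑ i, p i * min_j C i j`, and it is attained by sending all of `p i` to a cost-minimizing
column. -/
theorem stmt_0 (hp hq : ℕ) (p : Fin (hp + 1) → ℝ) (q : Fin (hq + 1) → ℝ)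
    (hpnn : ∀ i, 0 ≤ p i) (hqnn : ∀ j, 0 ≤ q j)
    (hpsum : ∑ i, p i = 1) (hqsum : ∑ j, q j = 1)
    (C : Fin (hp + 1) → Fin (hq + 1) → ℝ) (hC : ∀ i j, 0 ≤ C i j) :
    IsLeast
      {c : ℝ | ∃ F : Fin (hp + 1) → Fin (hq + 1) → ℝ,
        (∀ i j, 0 ≤ F i j) ∧ (∀ i, ∑ j, F i j = p i) ∧
        c = ∑ i, ∑ j, F i j * C i j}
      (∑ i, p i * Finset.univ.inf' Finset.univ_nonempty (C i)) ∧
    ∀ σ : Fin (hp + 1) → Fin (hq + 1), (∀ i j, C i (σ i) ≤ C i j) →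
      (∑ i, ∑ j, (if j = σ i then p i else 0) * C i j)
        = ∑ i, p i * Finset.univ.inf' Finset.univ_nonempty (C i) :=
  stmt_0_general hp hq p hpnn C
end

section
/- With ACT_k defined as the capacity-constrained relaxation restricted to the top-k smallest-cost columns per row, one has ACT_k(p,q) ≤ ICT(p,q) for every k, and ACT_{h_q}(p,q) = ICT(p,q). -/
theorem stmt_9_general (hp hq : ℕ) (p : Fin (hp + 1) → ℝ) (q : Fin (hq + 1) → ℝ)
    (C : Fin (hp + 1) → Fin (hq + 1) → ℝ)
    (s : Fin (hp + 1) → Equiv.Perm (Fin (hq + 1)))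
    (act : ℕ → ℝ) (ict : ℝ)
    (hA : ∀ k : ℕ, IsLeast
      {c : ℝ | ∃ F : Fin (hp + 1) → Fin (hq + 1) → ℝ,
        (∀ i j, 0 ≤ F i j) ∧ (∀ i, ∑ j, F i j = p i) ∧
        (∀ i, ∀ l : Fin (hq + 1), (l : ℕ) < k → F i (s i l) ≤ q (s i l)) ∧
        c = ∑ i, ∑ j, F i j * C i j} (act k))
    (hI : IsLeast
      {c : ℝ | ∃ F : Fin (hp + 1) → Fin (hq + 1) → ℝ,
        (∀ i j, 0 ≤ F i j) ∧ (∀ i, ∑ j, F i j = p i) ∧ (∀ i j, F i j ≤ q j) ∧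
        c = ∑ i, ∑ j, F i j * C i j} ict) :
    (∀ k : ℕ, act k ≤ ict) ∧ act (hq + 1) = ict := by
  have act_le_ict (k : ℕ) : act k ≤ ict :=
    hI.mono (hA k) fun _ ⟨F, hF_nonneg, hF_row, hF_cap, hc⟩ =>
      ⟨F, hF_nonneg, hF_row, fun i l _ => hF_cap i (s i l), hc⟩
  -- With `k = hq + 1` every sorted position is capped, and `s i` reaches every column.
  have ict_le_act : ict ≤ act (hq + 1) :=
    (hA (hq + 1)).mono hI fun _ ⟨F, hF_nonneg, hF_row, hF_cap, hc⟩ =>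
      ⟨F, hF_nonneg, hF_row, fun i => (s i).forall_congr_right.mp fun l => hF_cap i l l.isLt, hc⟩
  exact ⟨act_le_ict, le_antisymm (act_le_ict _) ict_le_act⟩

/-- ACT_k is a lower bound on ICT for every `k`, and ACT with `k = h_q` equals ICT. -/
theorem stmt_9 (hp hq : ℕ) (p : Fin (hp + 1) → ℝ) (q : Fin (hq + 1) → ℝ)
    (hpnn : ∀ i, 0 ≤ p i) (hqnn : ∀ j, 0 ≤ q j)
    (hpsum : ∑ i, p i = 1) (hqsum : ∑ j, q j = 1)
    (C : Fin (hp + 1) → Fin (hq + 1) → ℝ) (hC : ∀ i j, 0 ≤ C i j)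
    (s : Fin (hp + 1) → Equiv.Perm (Fin (hq + 1)))
    (hsort : ∀ i, ∀ l l' : Fin (hq + 1), l ≤ l' → C i (s i l) ≤ C i (s i l'))
    (act : ℕ → ℝ) (ict : ℝ)
    (hA : ∀ k : ℕ, IsLeast
      {c : ℝ | ∃ F : Fin (hp + 1) → Fin (hq + 1) → ℝ,
        (∀ i j, 0 ≤ F i j) ∧ (∀ i, ∑ j, F i j = p i) ∧
        (∀ i, ∀ l : Fin (hq + 1), (l : ℕ) < k → F i (s i l) ≤ q (s i l)) ∧
        c = ∑ i, ∑ j, F i j * C i j} (act k))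
    (hI : IsLeast
      {c : ℝ | ∃ F : Fin (hp + 1) → Fin (hq + 1) → ℝ,
        (∀ i j, 0 ≤ F i j) ∧ (∀ i, ∑ j, F i j = p i) ∧ (∀ i j, F i j ≤ q j) ∧
        c = ∑ i, ∑ j, F i j * C i j} ict) :
    (∀ k : ℕ, act k ≤ ict) ∧ act (hq + 1) = ict :=
  stmt_9_general hp hq p q C s act ict hA hI
end

section
/- Suppose h_p = h_q = h and the cost matrix C is effective, i.e., C_{i,j} = 0 implies i = j. If p, q are nonnegative histograms each summing to 1 and OMR(p,q) = 0, then p = q. -/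
/-!
A plan of cost zero can only use zero-cost entries, which for an effective cost matrix lie on the
diagonal. So each row of the plan is concentrated on its diagonal entry, giving `p i = F i i ≤ q i`
(by the capacity constraint if `C i i = 0`, and because then `F i i = 0` otherwise). Since `p` and
`q` have the same total mass, `p ≤ q` forces `p = q`.
-/

open Finset

theorem mul_eq_zero_of_sum_sum_mul_eq_zero {ι κ : Type*} [Fintype ι] [Fintype κ]
    {F C : ι → κ → ℝ} (hF : ∀ i j, 0 ≤ F i j) (hC : ∀ i j, 0 ≤ C i j)
    (h0 : ∑ i, ∑ j, F i j * C i j = 0) (i : ι) (j : κ) : F i j * C i j = 0 := by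
  have hterm : ∀ i j, 0 ≤ F i j * C i j := fun i j => mul_nonneg (hF i j) (hC i j)
  have hrow := (Fintype.sum_eq_zero_iff_of_nonneg
    fun i => Fintype.sum_nonneg (hterm i)).mp h0
  exact congrFun ((Fintype.sum_eq_zero_iff_of_nonneg (hterm i)).mp (congrFun hrow i)) j

theorem sum_row_eq_diag_of_mul_eq_zero {ι : Type*} [Fintype ι] {F C : ι → ι → ℝ}
    (heff : ∀ i j, C i j = 0 → i = j) (hzero : ∀ i j, F i j * C i j = 0) (i : ι) :
    ∑ j, F i j = F i i :=
  Fintype.sum_eq_single i fun j hji =>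
    (mul_eq_zero.mp (hzero i j)).resolve_right fun hC => hji (heff i j hC).symm

theorem diag_le_of_mul_eq_zero {ι : Type*} {F C : ι → ι → ℝ} {q : ι → ℝ} (hq : ∀ j, 0 ≤ q j)
    (hcap : ∀ i j, C i j = 0 → F i j ≤ q j) (hzero : ∀ i j, F i j * C i j = 0) (i : ι) :
    F i i ≤ q i := by
  rcases mul_eq_zero.mp (hzero i i) with hF | hC
  · exact hF ▸ hq i
  · exact hcap i i hC

theorem eq_of_le_of_sum_eq {ι : Type*} [Fintype ι] {p q : ι → ℝ} (hle : ∀ i, p i ≤ q i)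
    (hsum : ∑ i, p i = ∑ i, q i) : p = q :=
  funext fun i => (sum_eq_sum_iff_of_le fun i _ => hle i).mp hsum i (mem_univ i)

theorem stmt_11_general (h : ℕ) (p q : Fin (h + 1) → ℝ)
    (hqnn : ∀ j, 0 ≤ q j)
    (hpsum : ∑ i, p i = 1) (hqsum : ∑ j, q j = 1)
    (C : Fin (h + 1) → Fin (h + 1) → ℝ) (hC : ∀ i j, 0 ≤ C i j)
    (heff : ∀ i j, C i j = 0 → i = j)
    (hO : IsLeast
      {c : ℝ | ∃ F : Fin (h + 1) → Fin (h + 1) → ℝ,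
        (∀ i j, 0 ≤ F i j) ∧ (∀ i, ∑ j, F i j = p i) ∧
        (∀ i j, C i j = 0 → F i j ≤ q j) ∧
        c = ∑ i, ∑ j, F i j * C i j} 0) :
    p = q := by
  obtain ⟨F, hFnn, hFrow, hFcap, hFcost⟩ := hO.1
  have hzero := mul_eq_zero_of_sum_sum_mul_eq_zero hFnn hC hFcost.symm
  refine eq_of_le_of_sum_eq (fun i => ?_) (hpsum.trans hqsum.symm)
  calc p i = F i i := (hFrow i).symm.trans (sum_row_eq_diag_of_mul_eq_zero heff hzero i)
    _ ≤ q i := diag_le_of_mul_eq_zero hqnn hFcap hzero i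

/-- If the cost matrix is effective (`C i j = 0 → i = j`), then `OMR(p,q) = 0`
implies `p = q`. -/
theorem stmt_11 (h : ℕ) (p q : Fin (h + 1) → ℝ)
    (hpnn : ∀ i, 0 ≤ p i) (hqnn : ∀ j, 0 ≤ q j)
    (hpsum : ∑ i, p i = 1) (hqsum : ∑ j, q j = 1)
    (C : Fin (h + 1) → Fin (h + 1) → ℝ) (hC : ∀ i j, 0 ≤ C i j)
    (heff : ∀ i j, C i j = 0 → i = j)
    (hO : IsLeast
      {c : ℝ | ∃ F : Fin (h + 1) → Fin (h + 1) → ℝ,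
        (∀ i j, 0 ≤ F i j) ∧ (∀ i, ∑ j, F i j = p i) ∧
        (∀ i j, C i j = 0 → F i j ≤ q j) ∧
        c = ∑ i, ∑ j, F i j * C i j} 0) :
    p = q :=
  stmt_11_general h p q hqnn hpsum hqsum C hC heff hO
end
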